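/- Let σ be a ranking of a set S drawn from the PL model with parameter θ*, let p ∈ [|S|−1], and let G_p be the position-p rank-breaking graph of σ. For any two distinct items i, i′ ∈ S: (1) P[σ^{−1}(i) < σ^{−1}(i′) | (i,i′) ∈ G_p] = e^{θ*_i}/(e^{θ*_i} + e^{θ*_{i′}}); and (2) the same identity holds conditioning additionally on the identity (and internal order) of the set of items ranked above position p, i.e., P[σ^{−1}(i) < σ^{−1}(i′) | (i,i′) ∈ G_p and {i″ ∈ S : σ^{−1}(i″) < p}] = e^{θ*_i}/(e^{θ*_i} + e^{θ*_{i′}}). -/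

import Mathlib

open Real

noncomputable section

/- A ranking of a finite set `S`: a bijection from positions `Fin S.card`
(position `0` is the highest rank) to the elements of `S`. -/
abbrev Ranking {ι : Type*} [DecidableEq ι] (S : Finset ι) := Fin S.card ≃ {x // x ∈ S}

/- The Plackett–Luce probability of observing the ranking `σ` of the set `S`,
under parameter `θ`. -/
noncomputable def PLProb {ι : Type*} [DecidableEq ι] (θ : ι → ℝ) (S : Finset ι)
    (σ : Ranking S) : ℝ :=
  ∏ a : Fin S.card,
    (Real.exp (θ (σ a).1) /
      ∑ a' ∈ Finset.univ.filter (fun a' => a ≤ a'), Real.exp (θ (σ a').1))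

/- The (1-based) position at which item `i` is ranked by `σ`. -/
def rankOf {ι : Type*} [DecidableEq ι] {S : Finset ι} (σ : Ranking S)
    (i : {x // x ∈ S}) : ℕ := (σ.symm i).val + 1

/- Probability of an event under the PL model for a single ranking of `S`. -/
open Classical in
noncomputable def PLprobEvent {ι : Type*} [DecidableEq ι] (θ : ι → ℝ) (S : Finset ι)
    (E : Ranking S → Prop) : ℝ :=
  ∑ σ : Ranking S, if E σ then PLProb θ S σ else 0

/- Probability of an event for `n` independent PL rankings of fixed offer sets. -/
open Classical in
noncomputable def jointProb {d n : ℕ} (θ : Fin d → ℝ) (S : Fin n → Finset (Fin d))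
    (E : (∀ j, Ranking (S j)) → Prop) : ℝ :=
  ∑ σ : (∀ j, Ranking (S j)), if E σ then ∏ j, PLProb θ (S j) (σ j) else 0

/- The parameter space `Ω_b`. -/
def OmegaB {d : ℕ} (b : ℝ) (θ : Fin d → ℝ) : Prop :=
  (∑ i, θ i) = 0 ∧ ∀ i, |θ i| ≤ b

/- Contribution to the rank-breaking log-likelihood from the separator at
(1-based) position `p` of the ranking `σ`. -/
open Classical in
noncomputable def rbTerm {d : ℕ} (θ : Fin d → ℝ) {S : Finset (Fin d)} (σ : Ranking S)
    (p : ℕ) : ℝ :=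
  ∑ i ∈ S.attach, ∑ i' ∈ S.attach,
    if rankOf σ i' = p ∧ p < rankOf σ i then
      θ i'.1 - Real.log (Real.exp (θ i.1) + Real.exp (θ i'.1))
    else 0

/- The rank-breaking log-likelihood. -/
noncomputable def LRB {d n : ℕ} (S : Fin n → Finset (Fin d)) (ℓ : Fin n → ℕ)
    (p : (j : Fin n) → Fin (ℓ j) → ℕ) (lam : (j : Fin n) → Fin (ℓ j) → ℝ)
    (σ : ∀ j, Ranking (S j)) (θ : Fin d → ℝ) : ℝ :=
  ∑ j, ∑ a, lam j a * rbTerm θ (σ j) (p j a)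

/- The rank-one matrix `(e_i - e_{i'}) (e_i - e_{i'})ᵀ`. -/
noncomputable def pairMatrix {d : ℕ} (i i' : Fin d) : Matrix (Fin d) (Fin d) ℝ :=
  Matrix.vecMulVec (Pi.single i 1 - Pi.single i' 1) (Pi.single i 1 - Pi.single i' 1)

/- Weighted comparison-graph Laplacian `Σ_j w_j Σ_{i<i' ∈ S_j} (e_i-e_{i'})(e_i-e_{i'})ᵀ`. -/
open Classical in
noncomputable def graphLaplacian {d n : ℕ} (S : Fin n → Finset (Fin d)) (w : Fin n → ℝ) :
    Matrix (Fin d) (Fin d) ℝ :=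
  ∑ j, w j • ∑ i ∈ S j, ∑ i' ∈ S j, if i < i' then pairMatrix i i' else 0

/- The eigenvalues of a Hermitian matrix, sorted in increasing order. -/
noncomputable def sortedEig {d : ℕ} {M : Matrix (Fin d) (Fin d) ℝ} (hM : M.IsHermitian) :
    Fin d → ℝ :=
  hM.eigenvalues ∘ Tuple.sort hM.eigenvalues

/- Euclidean norm of a vector in `ℝ^m`. -/
noncomputable def l2norm {m : ℕ} (v : Fin m → ℝ) : ℝ := Real.sqrt (∑ i, (v i) ^ 2)

end

/-
Decompose a Plackett–Luce ranking of `S` by its top item: the top item is `x` with probability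
`exp θ x / ∑_{y ∈ S} exp θ y`, and the rest is a Plackett–Luce ranking of `S \ {x}`. Conditionally
on the items above position `p`, the item at position `p` is therefore the first choice among the
remaining items, so by induction on `p` the two orientations of an edge `{i, i'}` of the position-`p`
rank-breaking graph have probabilities in the ratio `exp θ i : exp θ i'`, whatever the items above
position `p` are required to be.
-/

section PlackettLuce

open Finset Nat

variable {ι : Type*} [DecidableEq ι] {S : Finset ι}

def eraseEquivNe (x : S) : S.erase x.1 ≃ {y : S // y ≠ x} where
  toFun y := ⟨⟨y, mem_of_mem_erase y.2⟩, fun h => ne_of_mem_erase y.2 congr($h.1)⟩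
  invFun y := ⟨y.1, mem_erase.2 ⟨fun h => y.2 (Subtype.ext h), y.1.2⟩⟩

def Ranking.cons (x : S) (τ : Ranking (S.erase x.1)) : Ranking S :=
  (finCongr (card_erase_add_one x.2).symm).trans <| (finSuccEquiv _).trans <|
    (Equiv.optionCongr (τ.trans (eraseEquivNe x))).trans (Equiv.optionSubtypeNe x)

theorem Ranking.cons_apply_zero (x : S) (τ : Ranking (S.erase x.1)) (h : 0 < S.card) :
    Ranking.cons x τ ⟨0, h⟩ = x := by
  simp [Ranking.cons]

theorem Ranking.cons_apply_succ (x : S) (τ : Ranking (S.erase x.1)) (b : Fin (S.erase x.1).card)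
    (h : b.val + 1 < S.card) : (Ranking.cons x τ ⟨b.val + 1, h⟩).1 = (τ b).1 := by
  have : Fin.cast (card_erase_add_one x.2).symm ⟨b.val + 1, h⟩ = b.succ := rfl
  simp [Ranking.cons, this, eraseEquivNe]

theorem Ranking.rankOf_cons_self (x : S) (τ : Ranking (S.erase x.1)) :
    rankOf (Ranking.cons x τ) x = 1 := by
  have h : 0 < S.card := card_pos.2 ⟨x, x.2⟩
  rw [rankOf, (Equiv.symm_apply_eq _).2 (Ranking.cons_apply_zero x τ h).symm]

theorem Ranking.rankOf_cons_of_ne (x : S) (τ : Ranking (S.erase x.1)) {j : ι} (hj : j ∈ S)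
    (hjx : j ≠ x.1) :
    rankOf (Ranking.cons x τ) ⟨j, hj⟩ = rankOf τ ⟨j, mem_erase.2 ⟨hjx, hj⟩⟩ + 1 := by
  set b := τ.symm ⟨j, mem_erase.2 ⟨hjx, hj⟩⟩
  have hb : b.val + 1 < S.card := by
    have := b.isLt; rw [← card_erase_add_one x.2]; omega
  have : Ranking.cons x τ ⟨b.val + 1, hb⟩ = ⟨j, hj⟩ := by
    ext; rw [Ranking.cons_apply_succ, Equiv.apply_symm_apply]
  rw [rankOf, rankOf, (Equiv.symm_apply_eq _).2 this.symm]

theorem Ranking.cons_injective :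
    Function.Injective (fun q : Σ x : S, Ranking (S.erase x.1) => Ranking.cons q.1 q.2) := by
  rintro ⟨x, τ⟩ ⟨x', τ'⟩ h
  have h0 : 0 < S.card := card_pos.2 ⟨x, x.2⟩
  obtain rfl : x = x' := by
    simpa [Ranking.cons_apply_zero] using congr($h ⟨0, h0⟩)
  have hτ : τ = τ' := by
    ext b
    have hb : b.val + 1 < S.card := by
      have := b.isLt; rw [← card_erase_add_one x.2]; omega
    simpa [Ranking.cons_apply_succ] using congr(($h ⟨b.val + 1, hb⟩).1)
  subst hτ
  rfl

theorem card_ranking (T : Finset ι) : Fintype.card (Ranking T) = T.card ! := by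
  rw [Fintype.card_equiv T.equivFin.symm, Fintype.card_fin]

theorem Ranking.cons_bijective (hS : S.Nonempty) :
    Function.Bijective (fun q : Σ x : S, Ranking (S.erase x.1) => Ranking.cons q.1 q.2) := by
  refine (Fintype.bijective_iff_injective_and_card _).2 ⟨Ranking.cons_injective, ?_⟩
  obtain ⟨m, hm⟩ := Nat.exists_eq_add_one_of_ne_zero hS.card_pos.ne'
  have hcard : ∀ x : S, Fintype.card (Ranking (S.erase x.1)) = m ! := fun x => by
    rw [card_ranking, card_erase_of_mem x.2, hm, Nat.add_sub_cancel]
  simp only [Fintype.card_sigma, hcard, sum_const, Finset.card_univ, Fintype.card_coe,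
    smul_eq_mul, card_ranking, hm, Nat.factorial_succ]

theorem sum_ranking_eq_sum_cons {M : Type*} [AddCommMonoid M] (hS : S.Nonempty)
    (f : Ranking S → M) :
    ∑ σ, f σ = ∑ x : S, ∑ τ : Ranking (S.erase x.1), f (Ranking.cons x τ) := by
  rw [← (Ranking.cons_bijective hS).sum_comp f, Fintype.sum_sigma]

@[to_additive]
theorem prod_fin_eq_mul_prod_succ {M : Type*} [CommMonoid M] {n m : ℕ} (h : n = m + 1)
    (f : Fin n → M) : ∏ a, f a = f ⟨0, by omega⟩ * ∏ b : Fin m, f ⟨b + 1, by omega⟩ := by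
  subst h; exact Fin.prod_univ_succ f

theorem sum_filter_fin_succ_le {M : Type*} [AddCommMonoid M] {n m : ℕ} (h : n = m + 1)
    (g : Fin n → M) (b : Fin m) :
    ∑ a ∈ univ.filter (fun a : Fin n => ⟨b + 1, by omega⟩ ≤ a), g a =
      ∑ c ∈ univ.filter (fun c => b ≤ c), g ⟨c + 1, by omega⟩ := by
  subst h
  rw [Finset.sum_filter, Finset.sum_filter, Fin.sum_univ_succ]
  simp only [Fin.le_def, Fin.val_zero, Fin.val_succ, add_le_add_iff_right]
  rw [if_neg (by omega), zero_add]
  rfl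

theorem sum_exp_ranking (θ : ι → ℝ) (σ : Ranking S) :
    ∑ a, exp (θ (σ a).1) = ∑ y ∈ S, exp (θ y) := by
  rw [← Finset.sum_coe_sort S (fun y => exp (θ y))]
  exact σ.sum_comp (fun y => exp (θ y.1))

theorem PLProb_cons (θ : ι → ℝ) (x : S) (τ : Ranking (S.erase x.1)) :
    PLProb θ S (Ranking.cons x τ) =
      exp (θ x) / (∑ y ∈ S, exp (θ y)) * PLProb θ (S.erase x.1) τ := by
  have hm := (card_erase_add_one x.2).symm
  rw [PLProb, prod_fin_eq_mul_prod_succ hm, PLProb, Ranking.cons_apply_zero,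
    filter_true_of_mem fun a _ => Fin.le_def.2 (Nat.zero_le _), sum_exp_ranking]
  congr 1
  refine prod_congr rfl fun b _ => ?_
  rw [sum_filter_fin_succ_le hm]
  simp only [Ranking.cons_apply_succ]

theorem sum_PLProb (θ : ι → ℝ) (S : Finset ι) : ∑ σ : Ranking S, PLProb θ S σ = 1 := by
  obtain ⟨n, hn⟩ : ∃ n, S.card = n := ⟨_, rfl⟩
  induction n generalizing S with
  | zero =>
    have : IsEmpty (Fin S.card) := by rw [hn]; infer_instance
    simp [PLProb, card_ranking, hn]
  | succ n ih =>
    have hS : S.Nonempty := card_pos.1 (by omega)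
    have hZ : 0 < ∑ y ∈ S, exp (θ y) := sum_pos (fun y _ => exp_pos _) hS
    have hx : ∀ x : S, ∑ τ : Ranking (S.erase x.1), PLProb θ S (Ranking.cons x τ) =
        exp (θ x) / ∑ y ∈ S, exp (θ y) := fun x => by
      rw [← mul_one (_ / _), ← ih (S.erase x.1) (by rw [card_erase_of_mem x.2, hn]; rfl),
        mul_sum]
      exact sum_congr rfl fun τ _ => PLProb_cons θ x τ
    simp only [sum_ranking_eq_sum_cons hS, hx]
    rw [← sum_div, Finset.sum_coe_sort S (fun y => exp (θ y)), div_self hZ.ne']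

theorem forall_fin_iff_zero_and_succ {n m : ℕ} (h : n = m + 1) {P : Fin n → Prop} :
    (∀ a, P a) ↔ P ⟨0, by omega⟩ ∧ ∀ b : Fin m, P ⟨b + 1, by omega⟩ := by
  subst h; exact Fin.forall_fin_succ

theorem Ranking.forall_lt_succ_cons {p : ℕ} (hp : 1 ≤ p) (Q : ℕ → ι → Prop) (x : S)
    (τ : Ranking (S.erase x.1)) :
    (∀ a : Fin S.card, a.val + 1 < p + 1 → Q a.val (Ranking.cons x τ a).1) ↔
      Q 0 x ∧ ∀ b : Fin (S.erase x.1).card, b.val + 1 < p → Q (b.val + 1) (τ b).1 := by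
  rw [forall_fin_iff_zero_and_succ (card_erase_add_one x.2).symm]
  simp only [Ranking.cons_apply_zero, Ranking.cons_apply_succ, add_lt_add_iff_right]
  simp [show 0 < p from hp]

section PLprobEvent

variable {θ : ι → ℝ}

theorem PLprobEvent_congr {E F : Ranking S → Prop} (h : ∀ σ, E σ ↔ F σ) :
    PLprobEvent θ S E = PLprobEvent θ S F := by
  rw [funext fun σ => propext (h σ)]

theorem PLprobEvent_or {E F : Ranking S → Prop} (h : ∀ σ, ¬(E σ ∧ F σ)) :
    PLprobEvent θ S (fun σ => E σ ∨ F σ) = PLprobEvent θ S E + PLprobEvent θ S F := by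
  simp only [PLprobEvent, ← sum_add_distrib]
  refine sum_congr rfl fun σ _ => ?_
  by_cases hE : E σ <;> by_cases hF : F σ <;> simp_all

open Classical in
theorem PLprobEvent_const (P : Prop) :
    PLprobEvent θ S (fun _ => P) = if P then 1 else 0 := by
  by_cases hP : P <;> simp [PLprobEvent, hP, sum_PLProb]

open Classical in
theorem PLprobEvent_const_and (P : Prop) (E : Ranking S → Prop) :
    PLprobEvent θ S (fun σ => P ∧ E σ) = if P then PLprobEvent θ S E else 0 := by
  by_cases hP : P <;> simp [PLprobEvent, hP]

theorem PLprobEvent_eq_sum_cons (hS : S.Nonempty) (E : Ranking S → Prop) :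
    PLprobEvent θ S E = ∑ x : S, exp (θ x) / (∑ y ∈ S, exp (θ y)) *
      PLprobEvent θ (S.erase x.1) (fun τ => E (Ranking.cons x τ)) := by
  rw [PLprobEvent, sum_ranking_eq_sum_cons hS]
  simp only [PLprobEvent, mul_sum, PLProb_cons, mul_ite, mul_zero]

end PLprobEvent

theorem Ranking.rankOf_cons (x : S) (τ : Ranking (S.erase x.1)) {j : ι} (hj : j ∈ S) :
    rankOf (Ranking.cons x τ) ⟨j, hj⟩ =
      if h : j = x.1 then 1 else rankOf τ ⟨j, mem_erase.2 ⟨h, hj⟩⟩ + 1 := by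
  split_ifs with h
  · obtain rfl : (⟨j, hj⟩ : S) = x := Subtype.ext h
    exact Ranking.rankOf_cons_self _ τ
  · exact Ranking.rankOf_cons_of_ne x τ hj h

/-- The edge `{i, i'}` of the position-`p` rank-breaking graph, oriented as `i` (at position `p`)
beating `i'`, with the item at each position `a + 1 < p` constrained by `Q a`. -/
def WinsAt (p : ℕ) (Q : ℕ → ι → Prop) (i i' : ι) (σ : Ranking S) : Prop :=
  ∃ (hi : i ∈ S) (hi' : i' ∈ S), (rankOf σ ⟨i, hi⟩ = p ∧ p < rankOf σ ⟨i', hi'⟩) ∧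
    ∀ a : Fin S.card, a.val + 1 < p → Q a.val (σ a).1

variable {i i' : ι}

theorem winsAt_one_cons (Q : ℕ → ι → Prop) (hi : i ∈ S) (hi' : i' ∈ S) (hne : i ≠ i') (x : S)
    (τ : Ranking (S.erase x.1)) : WinsAt 1 Q i i' (Ranking.cons x τ) ↔ x.1 = i := by
  simp only [WinsAt, hi, hi', exists_true_left, Ranking.rankOf_cons]
  constructor
  · rintro ⟨⟨h, -⟩, -⟩
    split_ifs at h with hx
    · exact hx.symm
    · simp [rankOf] at h
  · rintro rfl
    refine ⟨⟨dif_pos rfl, ?_⟩, fun a ha => absurd ha (by omega)⟩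
    rw [dif_neg hne.symm]
    simp [rankOf]

theorem winsAt_succ_cons {p : ℕ} (hp : 1 ≤ p) (Q : ℕ → ι → Prop) (x : S)
    (τ : Ranking (S.erase x.1)) :
    WinsAt (p + 1) Q i i' (Ranking.cons x τ) ↔
      (x.1 ≠ i ∧ x.1 ≠ i' ∧ Q 0 x) ∧ WinsAt p (fun k => Q (k + 1)) i i' τ := by
  simp only [WinsAt, Ranking.rankOf_cons, Ranking.forall_lt_succ_cons hp, mem_erase]
  constructor
  · rintro ⟨hi, hi', ⟨h1, h2⟩, hQ0, hQ⟩
    have hxi : i ≠ x.1 := fun h => by rw [dif_pos h] at h1; omega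
    have hxi' : i' ≠ x.1 := fun h => by rw [dif_pos h] at h2; omega
    rw [dif_neg hxi] at h1
    rw [dif_neg hxi'] at h2
    exact ⟨⟨hxi.symm, hxi'.symm, hQ0⟩, ⟨hxi, hi⟩, ⟨hxi', hi'⟩, ⟨by omega, by omega⟩, hQ⟩
  · rintro ⟨⟨-, -, hQ0⟩, ⟨hxi, hi⟩, ⟨hxi', hi'⟩, ⟨h1, h2⟩, hQ⟩
    refine ⟨hi, hi', ?_, hQ0, hQ⟩
    rw [dif_neg hxi, dif_neg hxi']
    omega

theorem PLprobEvent_winsAt_one (θ : ι → ℝ) (Q : ℕ → ι → Prop) (hi : i ∈ S) (hi' : i' ∈ S)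
    (hne : i ≠ i') :
    PLprobEvent θ S (WinsAt 1 Q i i') = exp (θ i) / ∑ y ∈ S, exp (θ y) := by
  rw [PLprobEvent_eq_sum_cons ⟨i, hi⟩]
  simp only [PLprobEvent_congr (winsAt_one_cons Q hi hi' hne _), PLprobEvent_const, mul_ite,
    mul_one, mul_zero]
  rw [Finset.sum_coe_sort S (fun y => if y = i then exp (θ y) / ∑ y ∈ S, exp (θ y) else 0),
    sum_ite_eq' S i, if_pos hi]

theorem exp_mul_PLprobEvent_winsAt (θ : ι → ℝ) (hne : i ≠ i') {p : ℕ} (hp : 1 ≤ p) :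
    ∀ (S : Finset ι) (Q : ℕ → ι → Prop), i ∈ S → i' ∈ S →
      exp (θ i') * PLprobEvent θ S (WinsAt p Q i i') =
        exp (θ i) * PLprobEvent θ S (WinsAt p Q i' i) := by
  induction p, hp using Nat.le_induction with
  | base =>
    intro S Q hi hi'
    rw [PLprobEvent_winsAt_one θ Q hi hi' hne, PLprobEvent_winsAt_one θ Q hi' hi hne.symm]
    ring
  | succ p hp ih =>
    intro S Q hi hi'
    rw [PLprobEvent_eq_sum_cons ⟨i, hi⟩, PLprobEvent_eq_sum_cons ⟨i, hi⟩, mul_sum, mul_sum]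
    refine sum_congr rfl fun x _ => ?_
    rw [PLprobEvent_congr (winsAt_succ_cons hp Q x), PLprobEvent_congr (winsAt_succ_cons hp Q x),
      PLprobEvent_const_and, PLprobEvent_const_and]
    split_ifs with h h'
    · have := ih (S.erase x.1) (fun k => Q (k + 1)) (mem_erase.2 ⟨h.1.symm, hi⟩)
        (mem_erase.2 ⟨h.2.1.symm, hi'⟩)
      linear_combination exp (θ x) / (∑ y ∈ S, exp (θ y)) * this
    · tauto
    · tauto
    · simp

theorem PLprobEvent_lt_and_edge {p : ℕ} (θ : ι → ℝ) (hp : 1 ≤ p) (hi : i ∈ S) (hi' : i' ∈ S)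
    (hne : i ≠ i') (Q : ℕ → ι → Prop) :
    PLprobEvent θ S (fun σ =>
        (rankOf σ ⟨i, hi⟩ < rankOf σ ⟨i', hi'⟩ ∧
          ((rankOf σ ⟨i', hi'⟩ = p ∧ p < rankOf σ ⟨i, hi⟩) ∨
           (rankOf σ ⟨i, hi⟩ = p ∧ p < rankOf σ ⟨i', hi'⟩))) ∧
        ∀ a : Fin S.card, a.val + 1 < p → Q a.val (σ a).1) =
      exp (θ i) / (exp (θ i) + exp (θ i')) *
        PLprobEvent θ S (fun σ =>
          ((rankOf σ ⟨i', hi'⟩ = p ∧ p < rankOf σ ⟨i, hi⟩) ∨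
           (rankOf σ ⟨i, hi⟩ = p ∧ p < rankOf σ ⟨i', hi'⟩)) ∧
          ∀ a : Fin S.card, a.val + 1 < p → Q a.val (σ a).1) := by
  have hwin : PLprobEvent θ S (fun σ =>
      (rankOf σ ⟨i, hi⟩ < rankOf σ ⟨i', hi'⟩ ∧
        ((rankOf σ ⟨i', hi'⟩ = p ∧ p < rankOf σ ⟨i, hi⟩) ∨
         (rankOf σ ⟨i, hi⟩ = p ∧ p < rankOf σ ⟨i', hi'⟩))) ∧
      ∀ a : Fin S.card, a.val + 1 < p → Q a.val (σ a).1) = PLprobEvent θ S (WinsAt p Q i i') :=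
    PLprobEvent_congr fun σ => by
      simp only [WinsAt, hi, hi', exists_true_left]
      constructor <;> rintro ⟨h, hQ⟩ <;> exact ⟨by omega, hQ⟩
  have hedge : PLprobEvent θ S (fun σ =>
      ((rankOf σ ⟨i', hi'⟩ = p ∧ p < rankOf σ ⟨i, hi⟩) ∨
       (rankOf σ ⟨i, hi⟩ = p ∧ p < rankOf σ ⟨i', hi'⟩)) ∧
      ∀ a : Fin S.card, a.val + 1 < p → Q a.val (σ a).1) =
      PLprobEvent θ S (WinsAt p Q i' i) + PLprobEvent θ S (WinsAt p Q i i') := by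
    rw [← PLprobEvent_or fun σ h => by obtain ⟨⟨_, _, h₁, _⟩, ⟨_, _, h₂, _⟩⟩ := h; omega]
    refine PLprobEvent_congr fun σ => ?_
    simp only [WinsAt, hi, hi', exists_true_left, or_and_right]
  have hratio := exp_mul_PLprobEvent_winsAt θ hne hp S Q hi hi'
  rw [hwin, hedge]
  field_simp
  linear_combination hratio

end PlackettLuce

theorem statement_11_general {ι : Type*} [DecidableEq ι]
    (θstar : ι → ℝ) (S : Finset ι)
    (p : ℕ) (hp1 : 1 ≤ p)
    (i i' : ι) (hi : i ∈ S) (hi' : i' ∈ S) (hne : i ≠ i') :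
    -- (1) pairwise outcomes extracted by position-p rank-breaking are unbiased
    (PLprobEvent θstar S (fun σ =>
        rankOf σ ⟨i, hi⟩ < rankOf σ ⟨i', hi'⟩ ∧
        ((rankOf σ ⟨i', hi'⟩ = p ∧ p < rankOf σ ⟨i, hi⟩) ∨
         (rankOf σ ⟨i, hi⟩ = p ∧ p < rankOf σ ⟨i', hi'⟩))) =
      (Real.exp (θstar i) / (Real.exp (θstar i) + Real.exp (θstar i'))) *
        PLprobEvent θstar S (fun σ =>
          (rankOf σ ⟨i', hi'⟩ = p ∧ p < rankOf σ ⟨i, hi⟩) ∨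
          (rankOf σ ⟨i, hi⟩ = p ∧ p < rankOf σ ⟨i', hi'⟩)))
    ∧
    -- (2) the same holds conditioned additionally on the (ordered) list of items
    -- ranked above position p
    (∀ t : ℕ → ι,
      PLprobEvent θstar S (fun σ =>
        (rankOf σ ⟨i, hi⟩ < rankOf σ ⟨i', hi'⟩ ∧
          ((rankOf σ ⟨i', hi'⟩ = p ∧ p < rankOf σ ⟨i, hi⟩) ∨
           (rankOf σ ⟨i, hi⟩ = p ∧ p < rankOf σ ⟨i', hi'⟩))) ∧
        (∀ a : Fin S.card, a.val + 1 < p → (σ a).1 = t a.val)) =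
      (Real.exp (θstar i) / (Real.exp (θstar i) + Real.exp (θstar i'))) *
        PLprobEvent θstar S (fun σ =>
          ((rankOf σ ⟨i', hi'⟩ = p ∧ p < rankOf σ ⟨i, hi⟩) ∨
           (rankOf σ ⟨i, hi⟩ = p ∧ p < rankOf σ ⟨i', hi'⟩)) ∧
          (∀ a : Fin S.card, a.val + 1 < p → (σ a).1 = t a.val))) :=
  ⟨by simpa using PLprobEvent_lt_and_edge θstar hp1 hi hi' hne fun _ _ => True,
    fun t => PLprobEvent_lt_and_edge θstar hp1 hi hi' hne fun k y => y = t k⟩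

theorem statement_11 {ι : Type*} [DecidableEq ι]
    (θstar : ι → ℝ) (S : Finset ι)
    (p : ℕ) (hp1 : 1 ≤ p) (hp2 : p ≤ S.card - 1)
    (i i' : ι) (hi : i ∈ S) (hi' : i' ∈ S) (hne : i ≠ i') :
    -- (1) pairwise outcomes extracted by position-p rank-breaking are unbiased
    (PLprobEvent θstar S (fun σ =>
        rankOf σ ⟨i, hi⟩ < rankOf σ ⟨i', hi'⟩ ∧
        ((rankOf σ ⟨i', hi'⟩ = p ∧ p < rankOf σ ⟨i, hi⟩) ∨
         (rankOf σ ⟨i, hi⟩ = p ∧ p < rankOf σ ⟨i', hi'⟩))) =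
      (Real.exp (θstar i) / (Real.exp (θstar i) + Real.exp (θstar i'))) *
        PLprobEvent θstar S (fun σ =>
          (rankOf σ ⟨i', hi'⟩ = p ∧ p < rankOf σ ⟨i, hi⟩) ∨
          (rankOf σ ⟨i, hi⟩ = p ∧ p < rankOf σ ⟨i', hi'⟩)))
    ∧
    -- (2) the same holds conditioned additionally on the (ordered) list of items
    -- ranked above position p
    (∀ t : ℕ → ι,
      PLprobEvent θstar S (fun σ =>
        (rankOf σ ⟨i, hi⟩ < rankOf σ ⟨i', hi'⟩ ∧
          ((rankOf σ ⟨i', hi'⟩ = p ∧ p < rankOf σ ⟨i, hi⟩) ∨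
           (rankOf σ ⟨i, hi⟩ = p ∧ p < rankOf σ ⟨i', hi'⟩))) ∧
        (∀ a : Fin S.card, a.val + 1 < p → (σ a).1 = t a.val)) =
      (Real.exp (θstar i) / (Real.exp (θstar i) + Real.exp (θstar i'))) *
        PLprobEvent θstar S (fun σ =>
          ((rankOf σ ⟨i', hi'⟩ = p ∧ p < rankOf σ ⟨i, hi⟩) ∨
           (rankOf σ ⟨i, hi⟩ = p ∧ p < rankOf σ ⟨i', hi'⟩)) ∧
          (∀ a : Fin S.card, a.val + 1 < p → (σ a).1 = t a.val))) :=
  statement_11_general θstar S p hp1 i i' hi hi' hne
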